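/- Let X ∈ ℝ^{d×n} with n ≥ 1, λ > 0, μ > 0, 0 < p, q < 2, and let (Z_t)_{t≥1} be a sequence in ℝ^{n×n} such that for every t, p·Z_{t+1}M_t + λq·Xᵀ(XZ_{t+1} − X)N_t = 0, where M_t = (Z_tᵀZ_t + μ²I)^{p/2−1} and N_t is the diagonal matrix with (N_t)_{ii} = (‖(XZ_t − X)_i‖_2² + μ²)^{q/2−1}. Then lim_{t→∞} ‖Z_t − Z_{t+1}‖_F = 0. -/

import Mathlib

open Matrix

/-- Real power of a real symmetric matrix, defined through the spectral decomposition
`A = U · diag(λ₁,…,λₙ) · Uᵀ` as `A^r = U · diag(λ₁^r,…,λₙ^r) · Uᵀ`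
(junk value `0` if `A` is not symmetric). -/
noncomputable def mpow {n : ℕ} (A : Matrix (Fin n) (Fin n) ℝ) (r : ℝ) :
    Matrix (Fin n) (Fin n) ℝ :=
  if hA : A.IsHermitian then hA.cfc (fun x : ℝ => x ^ r) else 0

/-- The smoothed LRR objective
`J(Z, μ) = Tr((ZᵀZ + μ²I)^{p/2}) + λ·∑ᵢ (‖(XZ − X)ᵢ‖₂² + μ²)^{q/2}`,
where `(XZ − X)ᵢ` denotes the `i`-th column of `XZ − X`. -/
noncomputable def smoothJ {d n : ℕ} (X : Matrix (Fin d) (Fin n) ℝ) (lam p q : ℝ)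
    (Z : Matrix (Fin n) (Fin n) ℝ) (μ : ℝ) : ℝ :=
  (mpow (Zᵀ * Z + μ ^ 2 • (1 : Matrix (Fin n) (Fin n) ℝ)) (p / 2)).trace +
    lam * ∑ i, (∑ j, ((X * Z - X) j i) ^ 2 + μ ^ 2) ^ (q / 2)

/-!
The IRLS step is a majorization–minimization step. Since `x ↦ x ^ (p/2)` and `x ↦ x ^ (q/2)`
are concave, their tangent lines at the current iterate `A = Z_t` bound `J` from above by
`J(A)` plus the change of the quadratic form
`G(Z) = (p/2) Tr(ZᵀZ M_t) + (λq/2) Tr((XZ − X)ᵀ(XZ − X) N_t)`; for the matrix term this is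
Klein's inequality, which reduces to the scalar tangent bound because the squared entries of the
change of basis between two eigenbases form a doubly stochastic matrix. The update equation says
that `B = Z_{t+1}` is the critical point of `G`, so `G(A) − G(B)` is a sum of squares and
`J(Z_{t+1}) + (p/2) Tr(ΔᵀΔ M_t) ≤ J(Z_t)` with `Δ = Z_t − Z_{t+1}`.

Hence `J(Z_t)` decreases; as `Tr((Z_tᵀZ_t + μ²I)^{p/2}) ≤ J(Z_0)`, the eigenvalues of
`Z_tᵀZ_t + μ²I` stay bounded, so `M_t ≥ c I` for a fixed `c > 0`. Thus
`∑_t ‖Z_t − Z_{t+1}‖_F² ≤ 2 J(Z_0) / (p c)` and the terms tend to zero.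
-/

open Filter Topology

theorem Real.rpow_le_tangent_line {x y r : ℝ} (hx : 0 ≤ x) (hy : 0 < y) (hr0 : 0 ≤ r)
    (hr1 : r ≤ 1) : x ^ r ≤ y ^ r + r * y ^ (r - 1) * (x - y) := by
  have hs : -1 ≤ x / y - 1 := by linarith [div_nonneg hx hy.le]
  have h := rpow_one_add_le_one_add_mul_self hs hr0 hr1
  rw [add_sub_cancel, Real.div_rpow hx hy.le, div_le_iff₀ (Real.rpow_pos_of_pos hy r)] at h
  calc x ^ r ≤ (1 + r * (x / y - 1)) * y ^ r := h
    _ = y ^ r + r * y ^ (r - 1) * (x - y) := by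
      rw [Real.rpow_sub_one hy.ne']; field_simp

theorem sum_rpow_le_of_doublyStochastic {ι : Type*} [Fintype ι] {P : Matrix ι ι ℝ}
    (hP : ∀ j i, 0 ≤ P j i) (hrow : ∀ j, ∑ i, P j i = 1) (hcol : ∀ i, ∑ j, P j i = 1)
    {d f : ι → ℝ} (hd : ∀ i, 0 ≤ d i) (hf : ∀ j, 0 < f j) {r : ℝ} (hr0 : 0 ≤ r) (hr1 : r ≤ 1) :
    ∑ i, d i ^ r ≤ ∑ j, (f j ^ r + r * f j ^ (r - 1) * (∑ i, P j i * d i - f j)) := by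
  calc ∑ i, d i ^ r = ∑ j, ∑ i, P j i * d i ^ r := by
        rw [Finset.sum_comm]; simp only [← Finset.sum_mul, hcol, one_mul]
    _ ≤ ∑ j, ∑ i, P j i * (f j ^ r + r * f j ^ (r - 1) * (d i - f j)) := by
        gcongr with j _ i _
        · exact hP j i
        · exact Real.rpow_le_tangent_line (hd i) (hf j) hr0 hr1
    _ = _ := by
        refine Finset.sum_congr rfl fun j _ => ?_
        have h : ∑ i, P j i * (f j ^ r + r * f j ^ (r - 1) * (d i - f j)) =
            (∑ i, P j i) * (f j ^ r - r * f j ^ (r - 1) * f j) +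
              r * f j ^ (r - 1) * ∑ i, P j i * d i := by
          rw [Finset.sum_mul, Finset.mul_sum, ← Finset.sum_add_distrib]
          exact Finset.sum_congr rfl fun i _ => by ring
        rw [h, hrow]; ring

theorem tendsto_zero_of_le_sub_succ {a F : ℕ → ℝ} {b : ℝ} (ha : ∀ t, 0 ≤ a t)
    (haF : ∀ t, a t ≤ F t - F (t + 1)) (hF : ∀ t, b ≤ F t) : Tendsto a atTop (𝓝 0) := by
  refine (summable_of_sum_range_le ha (c := F 0 - b) fun T => ?_).tendsto_atTop_zero
  calc ∑ t ∈ Finset.range T, a t ≤ ∑ t ∈ Finset.range T, (F t - F (t + 1)) :=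
        Finset.sum_le_sum fun t _ => haF t
    _ = F 0 - F T := Finset.sum_range_sub' F T
    _ ≤ F 0 - b := by linarith [hF T]

namespace Matrix

variable {ι κ : Type*} [Fintype ι] [Fintype κ] {R : Type*} [CommRing R]

theorem trace_add_transpose_mul_self_mul {M : Matrix ι ι R} (hM : Mᵀ = M) (B Δ : Matrix κ ι R) :
    ((B + Δ)ᵀ * (B + Δ) * M).trace =
      (Bᵀ * B * M).trace + 2 * (Δᵀ * (B * M)).trace + (Δᵀ * Δ * M).trace := by
  have hcross : (Bᵀ * Δ * M).trace = (Δᵀ * (B * M)).trace := by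
    rw [← trace_transpose, transpose_mul, transpose_mul, hM, transpose_transpose, trace_mul_comm,
      Matrix.mul_assoc]
  have hexpand : (B + Δ)ᵀ * (B + Δ) * M =
      Bᵀ * B * M + Bᵀ * Δ * M + Δᵀ * (B * M) + Δᵀ * Δ * M := by
    simp only [transpose_add, Matrix.add_mul, Matrix.mul_add, Matrix.mul_assoc]; abel
  rw [hexpand, trace_add, trace_add, trace_add, hcross]
  ring

variable [DecidableEq ι]

theorem trace_conj_diagonal {U : Matrix ι ι R} (hU : Uᵀ * U = 1) (w : ι → R) :
    (U * diagonal w * Uᵀ).trace = ∑ i, w i := by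
  rw [trace_mul_cycle, hU, one_mul, trace_diagonal]

theorem transpose_conj_diagonal (U : Matrix ι ι R) (w : ι → R) :
    (U * diagonal w * Uᵀ)ᵀ = U * diagonal w * Uᵀ := by
  rw [transpose_mul, transpose_mul, transpose_transpose, diagonal_transpose, mul_assoc]

theorem trace_conj_diagonal_mul_conj_diagonal (U V : Matrix ι ι R) (d g : ι → R) :
    (V * diagonal g * Vᵀ * (U * diagonal d * Uᵀ)).trace =
      ∑ j, g j * ∑ i, (Vᵀ * U) j i ^ 2 * d i := by
  have hcycle : (V * diagonal g * Vᵀ * (U * diagonal d * Uᵀ)).trace =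
      (diagonal g * ((Vᵀ * U) * diagonal d * (Vᵀ * U)ᵀ)).trace := by
    rw [show V * diagonal g * Vᵀ * (U * diagonal d * Uᵀ) =
        V * (diagonal g * Vᵀ * U * diagonal d * Uᵀ) by simp only [Matrix.mul_assoc],
      trace_mul_comm, transpose_mul, transpose_transpose]
    simp only [Matrix.mul_assoc]
  rw [hcycle]
  generalize Vᵀ * U = W
  unfold trace
  refine Finset.sum_congr rfl fun j _ => ?_
  rw [diag_apply, diagonal_mul, mul_apply]
  congr 1
  refine Finset.sum_congr rfl fun i _ => ?_
  rw [mul_diagonal, transpose_apply]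
  ring

theorem trace_transpose_mul_self_mul_diagonal (P : Matrix κ ι R) (ν : ι → R) :
    (Pᵀ * P * diagonal ν).trace = ∑ i, ν i * ∑ k, P k i ^ 2 := by
  simp only [trace, diag, mul_diagonal]
  simp only [mul_apply, transpose_apply, sq, Finset.mul_sum, Finset.sum_mul]
  exact Finset.sum_congr rfl fun i _ => Finset.sum_congr rfl fun k _ => by ring

theorem sum_sq_apply_eq_one {W : Matrix ι ι R} (hW : Wᵀ * W = 1) (i : ι) :
    ∑ j, W j i ^ 2 = 1 := by
  simpa [mul_apply, one_apply, sq] using congrFun (congrFun hW i) i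

theorem mul_sum_sq_le_trace_mul_conj_diagonal {U : Matrix ι ι ℝ} (hU : U * Uᵀ = 1)
    {w : ι → ℝ} {c : ℝ} (hc : ∀ i, c ≤ w i) (Δ : Matrix κ ι ℝ) :
    c * ∑ k, ∑ i, Δ k i ^ 2 ≤ (Δᵀ * Δ * (U * diagonal w * Uᵀ)).trace := by
  have hrot : (Δᵀ * Δ * (U * diagonal w * Uᵀ)).trace =
      ((Δ * U)ᵀ * (Δ * U) * diagonal w).trace := by
    rw [show Δᵀ * Δ * (U * diagonal w * Uᵀ) = Δᵀ * Δ * U * diagonal w * Uᵀ by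
      simp only [Matrix.mul_assoc], trace_mul_comm, transpose_mul]
    simp only [Matrix.mul_assoc]
  have hrow : ∀ k, ∑ i, (Δ * U) k i ^ 2 = ∑ i, Δ k i ^ 2 := fun k => by
    have h : (Δ * U) * (Δ * U)ᵀ = Δ * Δᵀ := by
      rw [transpose_mul, Matrix.mul_assoc, ← Matrix.mul_assoc U, hU, Matrix.one_mul]
    have hk := congrFun (congrFun h k) k
    rw [mul_apply (M := Δ * U), mul_apply (M := Δ)] at hk
    simpa only [transpose_apply, sq] using hk
  have hfrob : ∑ i, ∑ k, (Δ * U) k i ^ 2 = ∑ k, ∑ i, Δ k i ^ 2 := by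
    rw [Finset.sum_comm]; exact Finset.sum_congr rfl fun k _ => hrow k
  rw [hrot, trace_transpose_mul_self_mul_diagonal, ← hfrob, Finset.mul_sum]
  gcongr with i
  exact hc i

theorem sum_rpow_sum_sq_add_le_tangent (P Q : Matrix κ ι ℝ) {μ r : ℝ} (hμ : μ ≠ 0) (hr0 : 0 ≤ r)
    (hr1 : r ≤ 1) :
    ∑ i, (∑ k, P k i ^ 2 + μ ^ 2) ^ r ≤ ∑ i, (∑ k, Q k i ^ 2 + μ ^ 2) ^ r +
      r * ((Pᵀ * P * diagonal fun i => (∑ k, Q k i ^ 2 + μ ^ 2) ^ (r - 1)).trace -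
        (Qᵀ * Q * diagonal fun i => (∑ k, Q k i ^ 2 + μ ^ 2) ^ (r - 1)).trace) := by
  rw [trace_transpose_mul_self_mul_diagonal, trace_transpose_mul_self_mul_diagonal,
    ← Finset.sum_sub_distrib, Finset.mul_sum, ← Finset.sum_add_distrib]
  refine Finset.sum_le_sum fun i _ => ?_
  have h := Real.rpow_le_tangent_line (r := r) (x := ∑ k, P k i ^ 2 + μ ^ 2)
    (y := ∑ k, Q k i ^ 2 + μ ^ 2) (by positivity) (by positivity) hr0 hr1
  exact h.trans_eq (by ring)

theorem posDef_transpose_mul_self_add_smul_one (Z : Matrix κ ι ℝ) {μ : ℝ} (hμ : μ ≠ 0) :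
    (Zᵀ * Z + μ ^ 2 • (1 : Matrix ι ι ℝ)).PosDef := by
  have hZ := posSemidef_conjTranspose_mul_self Z
  rw [conjTranspose_eq_transpose_of_trivial] at hZ
  exact PosDef.posSemidef_add hZ (PosDef.one.smul (by positivity))

end Matrix

theorem Matrix.PosDef.exists_mpow_eq {m : ℕ} {A : Matrix (Fin m) (Fin m) ℝ} (hA : A.PosDef) :
    ∃ (U : Matrix (Fin m) (Fin m) ℝ) (e : Fin m → ℝ), (∀ i, 0 < e i) ∧ Uᵀ * U = 1 ∧
      U * Uᵀ = 1 ∧ A = U * diagonal e * Uᵀ ∧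
      ∀ r : ℝ, mpow A r = U * diagonal (fun i => e i ^ r) * Uᵀ := by
  have htU : star (hA.1.eigenvectorUnitary : Matrix (Fin m) (Fin m) ℝ) =
      (hA.1.eigenvectorUnitary : Matrix (Fin m) (Fin m) ℝ)ᵀ := by
    rw [star_eq_conjTranspose, conjTranspose_eq_transpose_of_trivial]
  refine ⟨hA.1.eigenvectorUnitary, hA.1.eigenvalues, hA.eigenvalues_pos, ?_, ?_, ?_, fun r => ?_⟩
  · rw [← htU]; exact Unitary.coe_star_mul_self _
  · rw [← htU]; exact Unitary.coe_mul_star_self _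
  · rw [← htU]; exact hA.1.spectral_theorem
  · rw [mpow, dif_pos hA.1, IsHermitian.cfc]
    simp [Function.comp_def, htU]

section mpow

variable {m : ℕ}

theorem trace_mpow_nonneg {A : Matrix (Fin m) (Fin m) ℝ} (hA : A.PosDef) (r : ℝ) :
    0 ≤ (mpow A r).trace := by
  obtain ⟨U, e, he, hUU, -, -, hA⟩ := hA.exists_mpow_eq
  rw [hA, trace_conj_diagonal hUU]
  exact Finset.sum_nonneg fun i _ => (Real.rpow_pos_of_pos (he i) r).le

theorem transpose_mpow {A : Matrix (Fin m) (Fin m) ℝ} (hA : A.PosDef) (r : ℝ) :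
    (mpow A r)ᵀ = mpow A r := by
  obtain ⟨U, e, -, -, -, -, hA⟩ := hA.exists_mpow_eq
  rw [hA]
  exact transpose_conj_diagonal U _

-- Klein's inequality for the concave function `x ↦ x ^ r`.
theorem trace_mpow_le_tangent {S T : Matrix (Fin m) (Fin m) ℝ} (hS : S.PosDef) (hT : T.PosDef)
    {r : ℝ} (hr0 : 0 ≤ r) (hr1 : r ≤ 1) :
    (mpow S r).trace ≤ (mpow T r).trace + r * (mpow T (r - 1) * (S - T)).trace := by
  obtain ⟨U, d, hd, hUU, hUU', hSd, hmS⟩ := hS.exists_mpow_eq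
  obtain ⟨V, f, hf, hVV, hVV', hTf, hmT⟩ := hT.exists_mpow_eq
  set W := Vᵀ * U
  have hWW : Wᵀ * W = 1 := by
    rw [transpose_mul, transpose_transpose, Matrix.mul_assoc, ← Matrix.mul_assoc V, hVV',
      Matrix.one_mul, hUU]
  have hWW' : W * Wᵀ = 1 := by
    rw [transpose_mul, transpose_transpose, Matrix.mul_assoc, ← Matrix.mul_assoc U, hUU',
      Matrix.one_mul, hVV]
  have hTS : (mpow T (r - 1) * S).trace = ∑ j, f j ^ (r - 1) * ∑ i, W j i ^ 2 * d i := by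
    rw [hmT, hSd, trace_conj_diagonal_mul_conj_diagonal]
  have hTT : (mpow T (r - 1) * T).trace = ∑ j, f j ^ (r - 1) * f j := by
    rw [hmT, hTf, trace_conj_diagonal_mul_conj_diagonal, hVV]
    simp [one_apply]
  have hP := sum_rpow_le_of_doublyStochastic (P := fun j i => W j i ^ 2)
    (fun j i => sq_nonneg _) (sum_sq_apply_eq_one (W := Wᵀ) (by rwa [transpose_transpose]))
    (sum_sq_apply_eq_one hWW)
    (fun i => (hd i).le) hf hr0 hr1
  calc (mpow S r).trace = ∑ i, d i ^ r := by rw [hmS, trace_conj_diagonal hUU]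
    _ ≤ _ := hP
    _ = (mpow T r).trace + r * (mpow T (r - 1) * (S - T)).trace := by
      rw [hmT r, trace_conj_diagonal hVV, Matrix.mul_sub, trace_sub, hTS, hTT,
        ← Finset.sum_sub_distrib, Finset.mul_sum, ← Finset.sum_add_distrib]
      exact Finset.sum_congr rfl fun j _ => by ring

theorem trace_transpose_mul_self_mul_mpow_nonneg {S : Matrix (Fin m) (Fin m) ℝ} (hS : S.PosDef)
    (s : ℝ) {κ : Type*} [Fintype κ] (Δ : Matrix κ (Fin m) ℝ) :
    0 ≤ (Δᵀ * Δ * mpow S s).trace := by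
  obtain ⟨U, e, he, -, hUU', -, hmS⟩ := hS.exists_mpow_eq
  rw [hmS]
  simpa using mul_sum_sq_le_trace_mul_conj_diagonal hUU' (c := 0)
    (fun i => (Real.rpow_pos_of_pos (he i) s).le) Δ

theorem mul_sum_sq_le_trace_mul_mpow {S : Matrix (Fin m) (Fin m) ℝ} (hS : S.PosDef)
    {r s K : ℝ} (hr : 0 < r) (hs : s ≤ 0) (hK : (mpow S r).trace ≤ K)
    {κ : Type*} [Fintype κ] (Δ : Matrix κ (Fin m) ℝ) :
    (K ^ r⁻¹) ^ s * ∑ k, ∑ i, Δ k i ^ 2 ≤ (Δᵀ * Δ * mpow S s).trace := by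
  have hK0 : 0 ≤ K := (trace_mpow_nonneg hS r).trans hK
  obtain ⟨U, e, he, hUU, hUU', -, hmS⟩ := hS.exists_mpow_eq
  rw [hmS]
  refine mul_sum_sq_le_trace_mul_conj_diagonal hUU' (fun i => ?_) Δ
  have hei : e i ^ r ≤ K := calc
    e i ^ r ≤ ∑ j, e j ^ r :=
      Finset.single_le_sum (fun j _ => (Real.rpow_pos_of_pos (he j) r).le) (Finset.mem_univ i)
    _ = (mpow S r).trace := by rw [hmS, trace_conj_diagonal hUU]
    _ ≤ K := hK
  exact Real.rpow_le_rpow_of_nonpos (he i)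
    ((Real.le_rpow_inv_iff_of_pos (he i).le hK0 hr).2 hei) hs

end mpow

section smoothJ

variable {d n : ℕ} (X : Matrix (Fin d) (Fin n) ℝ) {lam p q μ : ℝ}

theorem trace_mpow_le_smoothJ (hlam : 0 ≤ lam) (Z : Matrix (Fin n) (Fin n) ℝ) :
    (mpow (Zᵀ * Z + μ ^ 2 • (1 : Matrix (Fin n) (Fin n) ℝ)) (p / 2)).trace ≤
      smoothJ X lam p q Z μ :=
  le_add_of_nonneg_right (mul_nonneg hlam (Finset.sum_nonneg fun i _ =>
    Real.rpow_nonneg (by positivity) _))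

theorem smoothJ_nonneg (hlam : 0 ≤ lam) (hμ : μ ≠ 0) (Z : Matrix (Fin n) (Fin n) ℝ) :
    0 ≤ smoothJ X lam p q Z μ :=
  (trace_mpow_nonneg (posDef_transpose_mul_self_add_smul_one Z hμ) _).trans
    (trace_mpow_le_smoothJ X hlam Z)

theorem smoothJ_add_le_of_update (hlam : 0 ≤ lam) (hμ : μ ≠ 0) (hp0 : 0 ≤ p) (hp2 : p ≤ 2)
    (hq0 : 0 ≤ q) (hq2 : q ≤ 2) (A B : Matrix (Fin n) (Fin n) ℝ)
    (hupd : p • (B * mpow (Aᵀ * A + μ ^ 2 • (1 : Matrix (Fin n) (Fin n) ℝ)) (p / 2 - 1)) +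
      (lam * q) • (Xᵀ * ((X * B - X) *
        diagonal fun i => (∑ j, ((X * A - X) j i) ^ 2 + μ ^ 2) ^ (q / 2 - 1))) = 0) :
    smoothJ X lam p q B μ + (p / 2) *
      ((A - B)ᵀ * (A - B) * mpow (Aᵀ * A + μ ^ 2 • (1 : Matrix (Fin n) (Fin n) ℝ)) (p / 2 - 1)).trace
      ≤ smoothJ X lam p q A μ := by
  set M := mpow (Aᵀ * A + μ ^ 2 • (1 : Matrix (Fin n) (Fin n) ℝ)) (p / 2 - 1)
  set ν : Fin n → ℝ := fun i => (∑ j, ((X * A - X) j i) ^ 2 + μ ^ 2) ^ (q / 2 - 1)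
  set Δ := A - B
  have hA : A = B + Δ := (add_sub_cancel B A).symm
  have hXA : X * A - X = (X * B - X) + X * Δ := by rw [hA, Matrix.mul_add]; abel
  have hspec : (mpow (Bᵀ * B + μ ^ 2 • (1 : Matrix (Fin n) (Fin n) ℝ)) (p / 2)).trace ≤
      (mpow (Aᵀ * A + μ ^ 2 • (1 : Matrix (Fin n) (Fin n) ℝ)) (p / 2)).trace +
        (p / 2) * ((Bᵀ * B * M).trace - (Aᵀ * A * M).trace) := by
    have h := trace_mpow_le_tangent (posDef_transpose_mul_self_add_smul_one B hμ)
      (posDef_transpose_mul_self_add_smul_one A hμ) (r := p / 2) (by linarith) (by linarith)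
    rwa [add_sub_add_right_eq_sub, Matrix.mul_sub, trace_sub, trace_mul_comm M,
      trace_mul_comm M] at h
  have hcol := sum_rpow_sum_sq_add_le_tangent (X * B - X) (X * A - X) hμ (r := q / 2)
    (by linarith) (by linarith)
  have hM : Mᵀ = M := transpose_mpow (posDef_transpose_mul_self_add_smul_one A hμ) _
  have eM := trace_add_transpose_mul_self_mul hM B Δ
  have eN := trace_add_transpose_mul_self_mul (diagonal_transpose ν) (X * B - X) (X * Δ)
  rw [← hA] at eM
  rw [← hXA] at eN
  rw [eM] at hspec
  rw [eN] at hcol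
  -- `hupd` says that `B` is the critical point of the quadratic majorant, so its cross terms cancel.
  have hcross : p * (Δᵀ * (B * M)).trace +
      lam * q * ((X * Δ)ᵀ * ((X * B - X) * diagonal ν)).trace = 0 := by
    have h := congrArg (fun Y => (Δᵀ * Y).trace) hupd
    simpa [Matrix.mul_add, trace_add, trace_smul, transpose_mul, Matrix.mul_assoc] using h
  have hres : 0 ≤ ((X * Δ)ᵀ * (X * Δ) * diagonal ν).trace := by
    rw [trace_transpose_mul_self_mul_diagonal]
    exact Finset.sum_nonneg fun i _ => mul_nonneg (Real.rpow_nonneg (by positivity) _)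
      (Finset.sum_nonneg fun k _ => sq_nonneg _)
  have hcol' := mul_le_mul_of_nonneg_left hcol hlam
  have hres' := mul_nonneg (mul_nonneg hlam hq0) hres
  unfold smoothJ
  linarith

end smoothJ

theorem stmt_17_general {d n : ℕ} (X : Matrix (Fin d) (Fin n) ℝ) (lam p q μ : ℝ)
    (hlam : 0 < lam) (hμ : 0 < μ) (hp0 : 0 < p) (hp2 : p < 2) (hq0 : 0 < q) (hq2 : q < 2)
    (Z : ℕ → Matrix (Fin n) (Fin n) ℝ)
    (hupd : ∀ t, p • (Z (t + 1) *
        mpow ((Z t)ᵀ * Z t + μ ^ 2 • (1 : Matrix (Fin n) (Fin n) ℝ)) (p / 2 - 1)) +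
      (lam * q) • (Xᵀ * ((X * Z (t + 1) - X) *
        Matrix.diagonal fun i => (∑ j, ((X * Z t - X) j i) ^ 2 + μ ^ 2) ^ (q / 2 - 1))) = 0) :
    Filter.Tendsto (fun t => Real.sqrt (∑ i, ∑ j, ((Z t - Z (t + 1)) i j) ^ 2))
      Filter.atTop (nhds 0) := by
  have hS t : ((Z t)ᵀ * Z t + μ ^ 2 • (1 : Matrix (Fin n) (Fin n) ℝ)).PosDef :=
    posDef_transpose_mul_self_add_smul_one (Z t) hμ.ne'
  have hdesc t := smoothJ_add_le_of_update X hlam.le hμ.ne' hp0.le hp2.le hq0.le hq2.le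
    (Z t) (Z (t + 1)) (hupd t)
  have hJ : Antitone fun t => smoothJ X lam p q (Z t) μ := antitone_nat_of_succ_le fun t => by
    nlinarith [hdesc t,
      trace_transpose_mul_self_mul_mpow_nonneg (hS t) (p / 2 - 1) (Z t - Z (t + 1))]
  have hJ0 t : smoothJ X lam p q (Z t) μ ≤ smoothJ X lam p q (Z 0) μ := hJ (Nat.zero_le t)
  set K := smoothJ X lam p q (Z 0) μ + 1
  have hK : 0 < K := by linarith [smoothJ_nonneg X (p := p) (q := q) hlam.le hμ.ne' (Z 0)]
  set c := (K ^ (p / 2)⁻¹) ^ (p / 2 - 1)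
  have hc : 0 < p / 2 * c := by positivity
  have hlow t := mul_sum_sq_le_trace_mul_mpow (hS t) (r := p / 2) (s := p / 2 - 1) (K := K)
    (by positivity) (by linarith)
    (by linarith [trace_mpow_le_smoothJ X hlam.le (p := p) (q := q) (μ := μ) (Z t), hJ0 t])
    (Z t - Z (t + 1))
  have hlim := tendsto_zero_of_le_sub_succ
    (a := fun t => p / 2 * c * ∑ i, ∑ j, ((Z t - Z (t + 1)) i j) ^ 2)
    (F := fun t => smoothJ X lam p q (Z t) μ)
    (fun t => by positivity) (fun t => by nlinarith [hdesc t, hlow t])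
    (fun t => smoothJ_nonneg X hlam.le hμ.ne' (Z t))
  have hD : Tendsto (fun t => ∑ i, ∑ j, ((Z t - Z (t + 1)) i j) ^ 2) atTop (𝓝 0) := by
    simpa only [inv_mul_cancel_left₀ hc.ne', mul_zero] using hlim.const_mul (p / 2 * c)⁻¹
  simpa using hD.sqrt

/-- **Theorem 3 (3).** If the sequence `(Z_t)` satisfies the IRLS update equation for every `t`,
then `lim_{t→∞} ‖Z_t − Z_{t+1}‖_F = 0`, where `‖M‖_F = √(∑ᵢⱼ Mᵢⱼ²)` is the Frobenius norm. -/
theorem stmt_17 {d n : ℕ} (hn : 1 ≤ n) (X : Matrix (Fin d) (Fin n) ℝ) (lam p q μ : ℝ)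
    (hlam : 0 < lam) (hμ : 0 < μ) (hp0 : 0 < p) (hp2 : p < 2) (hq0 : 0 < q) (hq2 : q < 2)
    (Z : ℕ → Matrix (Fin n) (Fin n) ℝ)
    (hupd : ∀ t, p • (Z (t + 1) *
        mpow ((Z t)ᵀ * Z t + μ ^ 2 • (1 : Matrix (Fin n) (Fin n) ℝ)) (p / 2 - 1)) +
      (lam * q) • (Xᵀ * ((X * Z (t + 1) - X) *
        Matrix.diagonal fun i => (∑ j, ((X * Z t - X) j i) ^ 2 + μ ^ 2) ^ (q / 2 - 1))) = 0) :
    Filter.Tendsto (fun t => Real.sqrt (∑ i, ∑ j, ((Z t - Z (t + 1)) i j) ^ 2))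
      Filter.atTop (nhds 0) :=
  stmt_17_general X lam p q μ hlam hμ hp0 hp2 hq0 hq2 Z hupd
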